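/- In the semilinear-function CRC construction, the linear invariant I₀(c) = Σ_{j=1}^m c(Y^P_j) − c(Y) (an integer) is preserved by every forward and reverse application of the output-activation reactions L_j^Y + Ŷ^P_j → L_j^Y + Y^P_j + Y, L_j^N + Y^P_j + Y → L_j^N + Ŷ^P_j, L_j^Y + Ŷ^C_j → L_j^Y + Y^C_j, L_j^N + Y^C_j → L_j^N + Ŷ^C_j, and Y^P_j + Y^C_j + Y → ∅, and hence equals 0 in every configuration bireachable from an initial configuration with no Y^P_j and no Y molecules. -/
import Mathlib


/-- Species of the output stage of the semilinear-function CRC. -/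
inductive OSp (m : ℕ) : Type
  | Y : OSp m
  | YPhat (j : Fin m) : OSp m
  | YP (j : Fin m) : OSp m
  | YChat (j : Fin m) : OSp m
  | YC (j : Fin m) : OSp m
  | LY (j : Fin m) : OSp m
  | LN (j : Fin m) : OSp m
  | other (n : ℕ) : OSp m
  deriving DecidableEq

section
variable {m : ℕ}

open OSp

def single (s : OSp m) : OSp m → ℕ := fun t => if t = s then 1 else 0

def add2 (a b : OSp m) : OSp m → ℕ := fun t => single a t + single b t
def add3 (a b c : OSp m) : OSp m → ℕ := fun t => single a t + single b t + single c t

/-- The output-activation reactions, for each `j`: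
`Lⱼʸ + Ŷⱼᴾ → Lⱼʸ + Yⱼᴾ + Y`, `Lⱼᴺ + Yⱼᴾ + Y → Lⱼᴺ + Ŷⱼᴾ`,
`Lⱼʸ + Ŷⱼᶜ → Lⱼʸ + Yⱼᶜ`, `Lⱼᴺ + Yⱼᶜ → Lⱼᴺ + Ŷⱼᶜ`,
`Yⱼᴾ + Yⱼᶜ + Y → ∅`; plus other reactions of the CRC that touch neither any
`Yⱼᴾ` nor `Y`. -/
def Rout (Rother : Set ((OSp m → ℕ) × (OSp m → ℕ))) :
    Set ((OSp m → ℕ) × (OSp m → ℕ)) :=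
  {r | (∃ j, r = (add2 (LY j) (YPhat j), add3 (LY j) (YP j) Y)) ∨
       (∃ j, r = (add3 (LN j) (YP j) Y, add2 (LN j) (YPhat j))) ∨
       (∃ j, r = (add2 (LY j) (YChat j), add2 (LY j) (YC j))) ∨
       (∃ j, r = (add2 (LN j) (YC j), add2 (LN j) (YChat j))) ∨
       (∃ j, r = (add3 (YP j) (YC j) Y, fun _ => 0)) ∨
       r ∈ Rother}

def BiStep (R : Set ((OSp m → ℕ) × (OSp m → ℕ))) (x y : OSp m → ℕ) : Prop :=
  ∃ r ∈ R, ((∀ l, r.1 l ≤ x l) ∧ y = fun l => x l - r.1 l + r.2 l) ∨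
           ((∀ l, r.2 l ≤ x l) ∧ y = fun l => x l - r.2 l + r.1 l)

/-- The linear invariant `I₀(c) = Σⱼ c(Yⱼᴾ) − c(Y)`. -/
def I0 (c : OSp m → ℕ) : ℤ := (∑ j : Fin m, (c (YP j) : ℤ)) - (c Y : ℤ)


lemma I0_apply (x a b : OSp m → ℕ) (h : ∀ l, a l ≤ x l) :
    I0 (fun l => x l - a l + b l) = I0 x - I0 a + I0 b := by
  have key : ∀ l, ((x l - a l + b l : ℕ) : ℤ) = (x l : ℤ) - a l + b l := by
    intro l; have := h l; omega
  simp only [I0, key, Finset.sum_add_distrib, Finset.sum_sub_distrib]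
  ring

lemma I0_zero_of (a : OSp m → ℕ) (hY : a Y = 0) (hP : ∀ j, a (YP j) = 0) :
    I0 a = 0 := by
  simp [I0, hY, hP]

lemma I0_react (Rother : Set ((OSp m → ℕ) × (OSp m → ℕ)))
    (hother : ∀ r ∈ Rother, r.1 Y = 0 ∧ r.2 Y = 0 ∧
      ∀ j : Fin m, r.1 (YP j) = 0 ∧ r.2 (YP j) = 0)
    (r : (OSp m → ℕ) × (OSp m → ℕ)) (hr : r ∈ Rout Rother) :
    I0 r.1 = 0 ∧ I0 r.2 = 0 := by
  rcases hr with ⟨j, rfl⟩ | ⟨j, rfl⟩ | ⟨j, rfl⟩ | ⟨j, rfl⟩ | ⟨j, rfl⟩ | h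
  · constructor <;> simp [I0, add2, add3, single, Finset.sum_ite_eq']
  · constructor <;> simp [I0, add2, add3, single, Finset.sum_ite_eq']
  · constructor <;> simp [I0, add2, add3, single, Finset.sum_ite_eq']
  · constructor <;> simp [I0, add2, add3, single, Finset.sum_ite_eq']
  · constructor <;> simp [I0, add2, add3, single, Finset.sum_ite_eq']
  · obtain ⟨h1, h2, h3⟩ := hother r h
    exact ⟨I0_zero_of _ h1 (fun j => (h3 j).1), I0_zero_of _ h2 (fun j => (h3 j).2)⟩

/-- `I₀` is preserved by every forward and reverse bi-step, and
hence equals `0` in every configuration bireachable from an initial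
configuration containing no `Yⱼᴾ` and no `Y` molecules. -/
theorem output_invariant (Rother : Set ((OSp m → ℕ) × (OSp m → ℕ)))
    (hother : ∀ r ∈ Rother, r.1 Y = 0 ∧ r.2 Y = 0 ∧
      ∀ j : Fin m, r.1 (YP j) = 0 ∧ r.2 (YP j) = 0) :
    (∀ x y : OSp m → ℕ, BiStep (Rout Rother) x y → I0 y = I0 x) ∧
    (∀ i : OSp m → ℕ, i Y = 0 → (∀ j : Fin m, i (YP j) = 0) →
      ∀ c : OSp m → ℕ, Relation.ReflTransGen (BiStep (Rout Rother)) i c →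
        I0 c = 0) := by
  have step : ∀ x y : OSp m → ℕ, BiStep (Rout Rother) x y → I0 y = I0 x := by
    intro x y ⟨r, hr, hcase⟩
    obtain ⟨h1, h2⟩ := I0_react Rother hother r hr
    rcases hcase with ⟨hle, rfl⟩ | ⟨hle, rfl⟩
    · rw [I0_apply x _ _ hle, h1, h2]; ring
    · rw [I0_apply x _ _ hle, h1, h2]; ring
  refine ⟨step, fun i hY hP c hreach => ?_⟩
  induction hreach with
  | refl => exact I0_zero_of _ hY hP
  | tail _ hstep ih => rw [step _ _ hstep, ih]

end
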